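/- Let G be a simple graph on n vertices whose edge set can be partitioned into α sets each forming a forest, and let r, s > 0 be real numbers. Let M be the set of vertices of G of degree at least r. Then the number of vertices in M that have at least s neighbors in M is at most 4α²n/(rs). -/

import Mathlib

/-- The subgraph of `G` consisting of the edges with label `i` under the edge-labeling `c`. -/
def labelGraph {V : Type*} {k : ℕ} (G : SimpleGraph V) (c : Sym2 V → Fin k) (i : Fin k) :
    SimpleGraph V where
  Adj u v := G.Adj u v ∧ c s(u, v) = i
  symm := by
    constructor
    intro u v ⟨h1, h2⟩
    exact ⟨h1.symm, by rwa [Sym2.eq_swap]⟩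
  loopless := ⟨fun v ⟨h, _⟩ => G.ne_of_adj h rfl⟩

/-!
Summing `#(N v ∩ S)` over `v ∈ S` counts every edge of `G[S]` twice, and `G[S]` is the union of
`α` induced forests, each with at most `#S` edges; so `∑_{v ∈ S} #(N v ∩ S) ≤ 2α #S`.
Markov's inequality applied to this with `S = V` gives `#M r ≤ 2αn`, and with `S = M` shows that
at most `2α #M / s` vertices have `s` neighbours in `M`. Multiplying the two bounds gives `4α²n/(rs)`.
-/

open Finset

theorem Finset.card_filter_nsmul_le_sum {ι M : Type*} [AddCommMonoid M] [PartialOrder M]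
    [IsOrderedAddMonoid M] (s : Finset ι) (f : ι → M) (hf : ∀ i ∈ s, 0 ≤ f i) (t : M)
    [DecidablePred fun i => t ≤ f i] :
    #(s.filter fun i => t ≤ f i) • t ≤ ∑ i ∈ s, f i :=
  calc #(s.filter fun i => t ≤ f i) • t
      ≤ ∑ i ∈ s.filter fun i => t ≤ f i, f i :=
        card_nsmul_le_sum _ _ _ fun _ hi => (mem_filter.1 hi).2
    _ ≤ ∑ i ∈ s, f i := sum_le_sum_of_subset_of_nonneg (filter_subset _ _) fun i hi _ => hf i hi

namespace SimpleGraph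

variable {V : Type*} [Fintype V] {G : SimpleGraph V}

theorem IsAcyclic.card_edgeFinset_le [Fintype G.edgeSet] (hG : G.IsAcyclic) :
    #G.edgeFinset ≤ Fintype.card V := by
  classical
  cases isEmpty_or_nonempty V
  · simp [Subsingleton.elim G.edgeFinset ∅]
  obtain ⟨T, hGT, -, hT⟩ := connected_top.exists_isTree_le_of_le_of_isAcyclic le_top hG
  calc #G.edgeFinset ≤ #T.edgeFinset := card_le_card (edgeFinset_mono hGT)
    _ ≤ Fintype.card V := by rw [← hT.card_edgeFinset]; omega

theorem IsAcyclic.sum_card_neighborFinset_inter_le [DecidableEq V] [DecidableRel G.Adj]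
    (hG : G.IsAcyclic) (s : Finset V) :
    ∑ v ∈ s, #(G.neighborFinset v ∩ s) ≤ 2 * #s := by
  have hinduce :
      ∑ v ∈ s, #(G.neighborFinset v ∩ s) = ∑ v : (s : Set V), (G.induce s).degree v := by
    rw [← sum_coe_sort]
    refine Fintype.sum_congr _ _ fun v => ?_
    have := congrArg card (G.map_neighborFinset_induce (s := (s : Set V)) v)
    simp only [card_map, card_neighborFinset_eq_degree, Finset.toFinset_coe] at this
    convert this.symm
  calc ∑ v ∈ s, #(G.neighborFinset v ∩ s) = 2 * #(G.induce s).edgeFinset := by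
        rw [hinduce, sum_degrees_eq_twice_card_edges]
    _ ≤ 2 * #s := by
        grw [(hG.induce s).card_edgeFinset_le]
        simp

end SimpleGraph

section labelGraph

variable {V : Type*} [Fintype V] [DecidableEq V] (G : SimpleGraph V) [DecidableRel G.Adj]
  {k : ℕ} (c : Sym2 V → Fin k)

instance (i : Fin k) : DecidableRel (labelGraph G c i).Adj :=
  fun u v => inferInstanceAs (Decidable (G.Adj u v ∧ c s(u, v) = i))

theorem card_neighborFinset_inter_eq_sum_labelGraph (v : V) (s : Finset V) :
    #(G.neighborFinset v ∩ s) = ∑ i, #((labelGraph G c i).neighborFinset v ∩ s) := by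
  rw [card_eq_sum_card_fiberwise fun u _ => mem_univ (c s(v, u))]
  refine sum_congr rfl fun i _ => congrArg card ?_
  ext u
  simp only [mem_filter, mem_inter, SimpleGraph.mem_neighborFinset]
  simp only [labelGraph]
  tauto

theorem sum_card_neighborFinset_inter_le_of_isAcyclic_labelGraph
    (hc : ∀ i, (labelGraph G c i).IsAcyclic) (s : Finset V) :
    ∑ v ∈ s, #(G.neighborFinset v ∩ s) ≤ 2 * k * #s :=
  calc ∑ v ∈ s, #(G.neighborFinset v ∩ s)
      = ∑ i, ∑ v ∈ s, #((labelGraph G c i).neighborFinset v ∩ s) := by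
        simp_rw [card_neighborFinset_inter_eq_sum_labelGraph G c]
        exact sum_comm
    _ ≤ ∑ _i : Fin k, 2 * #s := sum_le_sum fun i _ => (hc i).sum_card_neighborFinset_inter_le s
    _ = 2 * k * #s := by simp [mul_comm, mul_left_comm]

end labelGraph

/-- Let `G` be a simple graph on `n` vertices whose edge set can be partitioned
into `α` sets each forming a forest, and let `r, s > 0` be real numbers. Let `M` be the set of
vertices of `G` of degree at least `r`. Then the number of vertices in `M` that have at least `s`
neighbors in `M` is at most `4α²n/(rs)`. -/
theorem stmt5 {V : Type*} [Fintype V] [DecidableEq V] (G : SimpleGraph V) [DecidableRel G.Adj]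
    (n α : ℕ) (hcard : Fintype.card V = n)
    (c : Sym2 V → Fin α) (hforest : ∀ i : Fin α, (labelGraph G c i).IsAcyclic)
    (r s : ℝ) (hr : 0 < r) (hs : 0 < s) :
    ((Finset.univ.filter (fun v : V => r ≤ (G.degree v : ℝ) ∧
        s ≤ (((G.neighborFinset v).filter (fun u => r ≤ (G.degree u : ℝ))).card : ℝ))).card : ℝ)
      ≤ 4 * α ^ 2 * n / (r * s) := by
  set M := univ.filter fun v : V => r ≤ (G.degree v : ℝ)
  have hneighbors (v : V) : (G.neighborFinset v).filter (fun u => r ≤ (G.degree u : ℝ)) =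
      G.neighborFinset v ∩ M := by
    ext; simp [M]
  have hdensity (S : Finset V) : ∑ v ∈ S, (#(G.neighborFinset v ∩ S) : ℝ) ≤ 2 * α * #S := by
    exact_mod_cast sum_card_neighborFinset_inter_le_of_isAcyclic_labelGraph G c hforest S
  have hM : #M * r ≤ 2 * α * n := by
    calc #M * r ≤ ∑ v, (G.degree v : ℝ) := by
          simpa using card_filter_nsmul_le_sum univ (fun v => (G.degree v : ℝ)) (by simp) r
      _ ≤ 2 * α * n := by simpa [hcard] using hdensity univ
  have hM' : #(M.filter fun v => s ≤ (#(G.neighborFinset v ∩ M) : ℝ)) * s ≤ 2 * α * #M := by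
    calc _ ≤ ∑ v ∈ M, (#(G.neighborFinset v ∩ M) : ℝ) := by
          simpa using card_filter_nsmul_le_sum M _ (by simp) s
      _ ≤ 2 * α * #M := hdensity M
  simp_rw [hneighbors, ← filter_filter]
  rw [le_div_iff₀ (by positivity)]
  calc _ = (#(M.filter fun v => s ≤ (#(G.neighborFinset v ∩ M) : ℝ)) * s) * r := by ring
    _ ≤ (2 * α * #M) * r := by gcongr
    _ = 2 * α * (#M * r) := by ring
    _ ≤ 2 * α * (2 * α * n) := by gcongr
    _ = 4 * α ^ 2 * n := by ring
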